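/- arXiv:1309.3620 — 4 statements merged into one kernel-verified Lean document; each statement's English description precedes it below -/
import Mathlib

section
/- In L¹(Ω, Σ, μ), two functions f and g are orthogonal in the sense ‖f + g‖₁ = ‖f − g‖₁ = ‖f‖₁ + ‖g‖₁ if and only if f·g = 0 almost everywhere. -/
open MeasureTheory

/-- In L¹(μ), `f ⋄ g` iff `f · g = 0` almost everywhere. -/
theorem L1_diamond_iff_ae_mul_eq_zero {Ω : Type*} [MeasurableSpace Ω] (μ : Measure Ω)
    (f g : Lp ℝ 1 μ) :
    (‖f + g‖ = ‖f‖ + ‖g‖ ∧ ‖f - g‖ = ‖f‖ + ‖g‖) ↔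
      (∀ᵐ x ∂μ, (f : Ω → ℝ) x * (g : Ω → ℝ) x = 0) := by
  have hf : Integrable (f : Ω → ℝ) μ := L1.integrable_coeFn f
  have hg : Integrable (g : Ω → ℝ) μ := L1.integrable_coeFn g
  have hadd : (↑(f + g) : Ω → ℝ) =ᵐ[μ] fun x => (f : Ω → ℝ) x + (g : Ω → ℝ) x :=
    Lp.coeFn_add f g
  have hsub : (↑(f - g) : Ω → ℝ) =ᵐ[μ] fun x => (f : Ω → ℝ) x - (g : Ω → ℝ) x :=
    Lp.coeFn_sub f g
  have hnf : ‖f‖ = ∫ x, |(f : Ω → ℝ) x| ∂μ := by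
    simpa [Real.norm_eq_abs] using L1.norm_eq_integral_norm f
  have hng : ‖g‖ = ∫ x, |(g : Ω → ℝ) x| ∂μ := by
    simpa [Real.norm_eq_abs] using L1.norm_eq_integral_norm g
  have hnadd : ‖f + g‖ = ∫ x, |(f : Ω → ℝ) x + (g : Ω → ℝ) x| ∂μ := by
    rw [L1.norm_eq_integral_norm]
    refine integral_congr_ae (hadd.mono fun x hx => ?_)
    show ‖(↑↑(f + g) : Ω → ℝ) x‖ = _
    rw [hx]; simp [Real.norm_eq_abs]
  have hnsub : ‖f - g‖ = ∫ x, |(f : Ω → ℝ) x - (g : Ω → ℝ) x| ∂μ := by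
    rw [L1.norm_eq_integral_norm]
    refine integral_congr_ae (hsub.mono fun x hx => ?_)
    show ‖(↑↑(f - g) : Ω → ℝ) x‖ = _
    rw [hx]; simp [Real.norm_eq_abs]
  have hsum : ‖f‖ + ‖g‖ = ∫ x, |(f : Ω → ℝ) x| + |(g : Ω → ℝ) x| ∂μ := by
    rw [hnf, hng, integral_add hf.abs hg.abs]
  have hiadd : Integrable (fun x => |(f : Ω → ℝ) x + (g : Ω → ℝ) x|) μ := (hf.add hg).abs
  have hisub : Integrable (fun x => |(f : Ω → ℝ) x - (g : Ω → ℝ) x|) μ := (hf.sub hg).abs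
  have hiabs : Integrable (fun x => |(f : Ω → ℝ) x| + |(g : Ω → ℝ) x|) μ := hf.abs.add hg.abs
  constructor
  · rintro ⟨h1, h2⟩
    rw [hnadd, hsum] at h1
    rw [hnsub, hsum] at h2
    have e1 : (fun x => |(f : Ω → ℝ) x + (g : Ω → ℝ) x|) =ᵐ[μ]
        fun x => |(f : Ω → ℝ) x| + |(g : Ω → ℝ) x| :=
      (integral_eq_iff_of_ae_le hiadd hiabs (Filter.Eventually.of_forall fun x =>
        abs_add_le _ _)).mp h1
    have e2 : (fun x => |(f : Ω → ℝ) x - (g : Ω → ℝ) x|) =ᵐ[μ]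
        fun x => |(f : Ω → ℝ) x| + |(g : Ω → ℝ) x| :=
      (integral_eq_iff_of_ae_le hisub hiabs (Filter.Eventually.of_forall fun x =>
        abs_sub _ _)).mp h2
    filter_upwards [e1, e2] with x h1x h2x
    have hc := sq_abs ((f : Ω → ℝ) x)
    have hd := sq_abs ((g : Ω → ℝ) x)
    have q1 : ((f : Ω → ℝ) x + (g : Ω → ℝ) x) ^ 2 = (|(f : Ω → ℝ) x| + |(g : Ω → ℝ) x|) ^ 2 := by
      rw [← sq_abs, h1x]
    have q2 : ((f : Ω → ℝ) x - (g : Ω → ℝ) x) ^ 2 = (|(f : Ω → ℝ) x| + |(g : Ω → ℝ) x|) ^ 2 := by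
      rw [← sq_abs, h2x]
    nlinarith [q1, q2, hc, hd]
  · intro h
    have key : ∀ᵐ x ∂μ, |(f : Ω → ℝ) x + (g : Ω → ℝ) x| = |(f : Ω → ℝ) x| + |(g : Ω → ℝ) x|
        ∧ |(f : Ω → ℝ) x - (g : Ω → ℝ) x| = |(f : Ω → ℝ) x| + |(g : Ω → ℝ) x| := by
      filter_upwards [h] with x hx
      rcases mul_eq_zero.mp hx with h0 | h0 <;> simp [h0]
    constructor
    · rw [hnadd, hsum]
      exact integral_congr_ae (key.mono fun x hx => hx.1)
    · rw [hnsub, hsum]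
      exact integral_congr_ae (key.mono fun x hx => hx.2)
end

section
/- Let Z be a normed space with the ⋄-orthogonality and suppose F_u is a face exposed by a norm-one functional u with Z₁ = conv(F_u ∪ F_{−u}). Then for any norm-one functional v, the face F_v intersects F_u or F_{−v} intersects F_u (Lemma 2 of the paper, stated for exposed faces): if x ∈ F_v and x = t·g + (1−t)·h with g ∈ F_u, h ∈ F_{−u}, t ∈ (0,1), then g, h ∈ F_v, hence F_v ∩ F_u ≠ ∅ and F_{−v} ∩ F_u ≠ ∅. -/
/-- If `Z₁ = conv(F_u ∪ F_{-u})` for a norm-one functional `u`, then for any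
norm-one functional `v` and `x ∈ F_v` decomposed as `x = t•g + (1-t)•h` with
`g ∈ F_u`, `h ∈ F_{-u}`, `t ∈ (0,1)`, one has `g, h ∈ F_v`; hence
`F_v ∩ F_u ≠ ∅` and `F_{-v} ∩ F_u ≠ ∅`. -/
theorem face_intersection {Z : Type*} [NormedAddCommGroup Z] [NormedSpace ℝ Z]
    (u v : Z →L[ℝ] ℝ) (hu : ‖u‖ = 1) (hv : ‖v‖ = 1)
    (x : Z) (hx : ‖x‖ ≤ 1 ∧ v x = 1)
    (t : ℝ) (ht : t ∈ Set.Ioo (0:ℝ) 1) (g h : Z)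
    (hg : ‖g‖ ≤ 1 ∧ u g = 1) (hh : ‖h‖ ≤ 1 ∧ u h = -1)
    (hdec : x = t • g + (1 - t) • h) :
    (‖g‖ ≤ 1 ∧ v g = 1) ∧ (‖h‖ ≤ 1 ∧ v h = 1) ∧
      (∃ a : Z, (‖a‖ ≤ 1 ∧ v a = 1) ∧ u a = 1) ∧
      (∃ b : Z, (‖b‖ ≤ 1 ∧ v b = -1) ∧ u b = 1) := by
  obtain ⟨ht0, ht1⟩ := ht
  have hvg : v g ≤ 1 := by
    calc v g ≤ |v g| := le_abs_self _
    _ ≤ ‖v‖ * ‖g‖ := by rw [← Real.norm_eq_abs]; exact v.le_opNorm g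
    _ ≤ 1 := by rw [hv]; simpa using hg.1
  have hvh : v h ≤ 1 := by
    calc v h ≤ |v h| := le_abs_self _
    _ ≤ ‖v‖ * ‖h‖ := by rw [← Real.norm_eq_abs]; exact v.le_opNorm h
    _ ≤ 1 := by rw [hv]; simpa using hh.1
  have heq : t * v g + (1 - t) * v h = 1 := by
    have := hx.2
    rw [hdec] at this
    simpa using this
  have hvg1 : v g = 1 := by nlinarith
  have hvh1 : v h = 1 := by nlinarith
  refine ⟨⟨hg.1, hvg1⟩, ⟨hh.1, hvh1⟩, ⟨g, ⟨hg.1, hvg1⟩, hg.2⟩,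
    ⟨-h, ⟨by simpa using hh.1, by simpa using hvh1⟩, by rw [map_neg, hh.2]; ring⟩⟩
end

section
/- Let X be a real vector space with a partial order making it an ordered vector space, and suppose for all x, y ∈ X there exist linear positive projections Q₊, Q₋ with Q₊ + Q₋ = I, Q₊(x − y) ≥ 0, Q₋(x − y) ≤ 0. Then z := Q₊x + Q₋y is the least upper bound of {x, y}: z ≥ x, z ≥ y, and z ≤ w for every upper bound w of {x, y}. -/
/-- Given positive projections `Q₊ + Q₋ = id` with `Q₊(x-y) ≥ 0`, `Q₋(x-y) ≤ 0`,
the element `Q₊ x + Q₋ y` is the least upper bound of `x` and `y`. -/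
theorem lub_from_positive_projections {X : Type*} [AddCommGroup X] [PartialOrder X] [IsOrderedAddMonoid X]
    [Module ℝ X] (Qp Qm : X →ₗ[ℝ] X)
    (hQp_proj : Qp ∘ₗ Qp = Qp) (hQm_proj : Qm ∘ₗ Qm = Qm)
    (hQp_pos : ∀ z : X, 0 ≤ z → 0 ≤ Qp z) (hQm_pos : ∀ z : X, 0 ≤ z → 0 ≤ Qm z)
    (hsum : Qp + Qm = LinearMap.id)
    (x y : X) (hp : 0 ≤ Qp (x - y)) (hm : Qm (x - y) ≤ 0) :
    x ≤ Qp x + Qm y ∧ y ≤ Qp x + Qm y ∧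
      ∀ w : X, x ≤ w → y ≤ w → Qp x + Qm y ≤ w := by
  have hsum' : ∀ z : X, Qp z + Qm z = z := fun z => by
    have := congrArg (fun f : X →ₗ[ℝ] X => f z) hsum
    simpa using this
  refine ⟨?_, ?_, ?_⟩
  · have h1 : 0 ≤ -Qm (x - y) := neg_nonneg.mpr hm
    have e1 : Qp x + Qm y - x = -Qm (x - y) := by
      rw [map_sub]; linear_combination (norm := abel) hsum' x
    exact sub_nonneg.mp (by rw [e1]; exact h1)
  · have e2 : Qp x + Qm y - y = Qp (x - y) := by
      rw [map_sub]; linear_combination (norm := abel) hsum' y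
    exact sub_nonneg.mp (by rw [e2]; exact hp)
  · intro w hx hy
    have h1 : 0 ≤ Qp (w - x) := hQp_pos _ (sub_nonneg.mpr hx)
    have h2 : 0 ≤ Qm (w - y) := hQm_pos _ (sub_nonneg.mpr hy)
    have e3 : w - (Qp x + Qm y) = Qp (w - x) + Qm (w - y) := by
      rw [map_sub, map_sub]; linear_combination (norm := abel) -hsum' w
    exact sub_nonneg.mp (by rw [e3]; exact add_nonneg h1 h2)
end

section
/- Let (Ω, Σ, μ) be a measure space and A, B ∈ Σ with μ(A), μ(B) ∈ (0, ∞). The indicator classes χ_A, χ_B ∈ L^∞(μ), viewed as functionals on L¹(μ), satisfy: F_{χ_A} ∩ F_{χ_B} = ∅ (no f ∈ L¹ with ‖f‖₁ ≤ 1, ∫_A f = ∫_B f = 1) if and only if μ(A ∩ B) = 0. -/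
open MeasureTheory

/-- For sets `A, B` of finite positive measure, the faces `F_{χ_A}` and
`F_{χ_B}` of the unit ball of L¹(μ) are disjoint iff `μ(A ∩ B) = 0`. -/
theorem faces_disjoint_iff_measure_inter_zero {Ω : Type*} [MeasurableSpace Ω]
    (μ : Measure Ω) (A B : Set Ω) (hA : MeasurableSet A) (hB : MeasurableSet B)
    (hA0 : μ A ≠ 0) (hAt : μ A ≠ ⊤) (hB0 : μ B ≠ 0) (hBt : μ B ≠ ⊤) :
    (¬ ∃ f : Lp ℝ 1 μ, ‖f‖ ≤ 1 ∧ (∫ x in A, f x ∂μ) = 1 ∧ (∫ x in B, f x ∂μ) = 1)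
      ↔ μ (A ∩ B) = 0 := by
  constructor
  · intro hno
    by_contra hne
    apply hno
    have hsm : MeasurableSet (A ∩ B) := hA.inter hB
    have hsf : μ (A ∩ B) ≠ ⊤ := fun h =>
      hAt (top_le_iff.mp (h ▸ measure_mono Set.inter_subset_left))
    set m := (μ (A ∩ B)).toReal with hm
    have hmpos : 0 < m := ENNReal.toReal_pos hne hsf
    have hcoe : (indicatorConstLp 1 hsm hsf (m⁻¹) : Lp ℝ 1 μ)
        =ᵐ[μ] (A ∩ B).indicator fun _ => m⁻¹ := indicatorConstLp_coeFn
    have hint : ∀ (S : Set Ω), MeasurableSet S → A ∩ B ⊆ S →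
        (∫ x in S, (indicatorConstLp 1 hsm hsf (m⁻¹) : Lp ℝ 1 μ) x ∂μ) = 1 := by
      intro S hS hsub
      rw [setIntegral_congr_ae hS (hcoe.mono fun x hx _ => hx),
        setIntegral_indicator hsm, Set.inter_eq_right.mpr hsub,
        setIntegral_const, smul_eq_mul, measureReal_def, ← hm]
      field_simp
    refine ⟨indicatorConstLp 1 hsm hsf (m⁻¹), ?_, ?_, ?_⟩
    · rw [norm_indicatorConstLp one_ne_zero ENNReal.one_ne_top]
      simp only [measureReal_def, ← hm, Real.norm_eq_abs, ENNReal.toReal_one, one_div, inv_one,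
        Real.rpow_one, abs_inv, abs_of_pos hmpos]
      rw [inv_mul_cancel₀ hmpos.ne']
    · exact hint A hA Set.inter_subset_left
    · exact hint B hB Set.inter_subset_right
  · intro h0
    rintro ⟨f, hf1, hfA, hfB⟩
    have hfi : Integrable f μ := L1.integrable_coeFn f
    have hdiff : (B \ A : Set Ω) =ᵐ[μ] B :=
      (MeasureTheory.diff_ae_eq_self (μ := μ)).mpr (by rwa [Set.inter_comm] at h0)
    have hBdiff : (∫ x in B \ A, f x ∂μ) = 1 := by
      rw [setIntegral_congr_set hdiff]; exact hfB
    have hU : (∫ x in A ∪ B, f x ∂μ) = 2 := by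
      rw [← Set.union_diff_self,
        setIntegral_union disjoint_sdiff_self_right (hB.diff hA)
          hfi.integrableOn hfi.integrableOn, hfA, hBdiff]
      norm_num
    have hle : (∫ x in A ∪ B, f x ∂μ) ≤ ‖f‖ := by
      calc (∫ x in A ∪ B, f x ∂μ) ≤ ∫ x in A ∪ B, ‖f x‖ ∂μ :=
            le_trans (le_abs_self _) (Real.norm_eq_abs _ ▸ norm_integral_le_integral_norm _)
        _ ≤ ∫ x, ‖f x‖ ∂μ := setIntegral_le_integral hfi.norm
            (Filter.Eventually.of_forall fun x => norm_nonneg _)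
        _ = ‖f‖ := (L1.norm_eq_integral_norm f).symm
    linarith
end
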